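/- Under the standing setup: for any two orbital words u and v over Q and any integer n ≥ 0, there exists a word r ∈ Q^n such that both u r and v r are orbital. -/
import Mathlib


namespace MealyFormal

variable {Q X : Type*}

/-- Extended transition function of the dual automaton: the action of a letter
`i ∈ Σ` on words over the stateset `Q`, defined by
`δ_i(ε) = ε` and `δ_i(x w) = δ_i(x) δ_{ρ_x(i)}(w)`. -/
def dExt (δ : X → Q → Q) (ρ : Q → X → X) : X → List Q → List Q
  | _, [] => []
  | i, x :: w => δ i x :: dExt δ ρ (ρ x i) w

/-- The action `δ_s = δ_{s_n} ∘ ⋯ ∘ δ_{s_1}` of a word `s` over `Σ` on words over `Q`. -/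
def dWord (δ : X → Q → Q) (ρ : Q → X → X) : List X → List Q → List Q
  | [], u => u
  | i :: s, u => dWord δ ρ s (dExt δ ρ i u)

/-- Extended production function: the action of a state `x ∈ Q` on words over the
alphabet `Σ`, defined by `ρ_x(ε) = ε` and `ρ_x(i s) = ρ_x(i) ρ_{δ_i(x)}(s)`. -/
def rExt (δ : X → Q → Q) (ρ : Q → X → X) : Q → List X → List X
  | _, [] => []
  | x, i :: s => ρ x i :: rExt δ ρ (δ i x) s

/-- The action `ρ_u = ρ_{x_n} ∘ ⋯ ∘ ρ_{x_1}` of a word `u = x_1⋯x_n` over `Q`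
on words over `Σ`. -/
def rWord (δ : X → Q → Q) (ρ : Q → X → X) : List Q → List X → List X
  | [], s => s
  | x :: u, s => rWord δ ρ u (rExt δ ρ x s)

/-- `v` lies in the orbit of `u` under the action of the dual automaton. -/
def InOrbit (δ : X → Q → Q) (ρ : Q → X → X) (u v : List Q) : Prop :=
  ∃ s : List X, dWord δ ρ s u = v

/-- The orbit (connected component of the corresponding power) of a word over `Q`. -/
def orbit (δ : X → Q → Q) (ρ : Q → X → X) (u : List Q) : Set (List Q) :=
  {v | InOrbit δ ρ u v}

/-- The action of the dual automaton on `Q^n` is transitive, i.e. `A^n` is connected. -/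
def LevelTransitive (δ : X → Q → Q) (ρ : Q → X → X) (n : ℕ) : Prop :=
  ∀ u v : List Q, u.length = n → v.length = n → InOrbit δ ρ u v

/-- The label `ℓ(u x)` of the nonempty word `u x`:
the number of `z ∈ Q` with `u z` in the orbit of `u x`. -/
noncomputable def label (δ : X → Q → Q) (ρ : Q → X → X) (u : List Q) (x : Q) : ℕ :=
  Set.ncard {z : Q | InOrbit δ ρ (u ++ [x]) (u ++ [z])}

/-- Prefix of length `i` of the (infinite) word `w = w_1 w_2 ⋯`. -/
def pref (w : ℕ → Q) (i : ℕ) : List Q := (List.range i).map w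

/-- The `n`-th power `u^n` of a word `u`. -/
def wpow (u : List Q) (n : ℕ) : List Q := (List.replicate n u).flatten

/-- The group generated by the Mealy automaton: the subgroup of permutations of `Σ*`
generated by the production functions `ρ_x`, `x ∈ Q`. -/
def autGroup (δ : X → Q → Q) (ρ : Q → X → X) : Subgroup (Equiv.Perm (List X)) :=
  Subgroup.closure {π : Equiv.Perm (List X) | ∃ q : Q, ⇑π = rExt δ ρ q}

/-- The semigroup of maps `Σ* → Σ*` generated under composition by the `ρ_x`, `x ∈ Q`. -/
def prodSemigroup (δ : X → Q → Q) (ρ : Q → X → X) :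
    Subsemigroup (Function.End (List X)) :=
  Subsemigroup.closure {f : Function.End (List X) | ∃ q : Q, f = rExt δ ρ q}

/-- The semigroup of maps `Q* → Q*` generated under composition by the `δ_i`, `i ∈ Σ`. -/
def dualSemigroup (δ : X → Q → Q) (ρ : Q → X → X) :
    Subsemigroup (Function.End (List Q)) :=
  Subsemigroup.closure {f : Function.End (List Q) | ∃ i : X, f = dExt δ ρ i}

/-- A word `w` over `Q` is orbital if all its factors of length `c+1`
belong to the reduction orbit `O2`. -/
def Orbital (c : ℕ) (O2 : Set (List Q)) (w : List Q) : Prop :=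
  ∀ f : List Q, f.length = c + 1 → f <:+: w → f ∈ O2

/-- A word is cyclically orbital if each of its powers is orbital. -/
def CycOrbital (c : ℕ) (O2 : Set (List Q)) (w : List Q) : Prop :=
  ∀ n : ℕ, Orbital c O2 (wpow w n)

/-- The standing setup: `A` is a connected invertible-reversible Mealy automaton
with 3 states, `0 < c = cd(A) < ∞`, and `Q^{c+1}` splits into exactly two orbits,
of sizes `2·3^c` and `3^c`; `O2` is the reduction orbit, of size `2·3^c`. -/
structure StandingSetup (δ : X → Q → Q) (ρ : Q → X → X) (c : ℕ) (O2 : Set (List Q)) :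
    Prop where
  card_three : Nat.card Q = 3
  invertible : ∀ q : Q, Function.Bijective (ρ q)
  reversible : ∀ i : X, Function.Bijective (δ i)
  connected : LevelTransitive δ ρ 1
  c_pos : 0 < c
  trans_c : LevelTransitive δ ρ c
  not_trans_succ : ¬ LevelTransitive δ ρ (c + 1)
  O2_is_orbit : ∃ w : List Q, w.length = c + 1 ∧ O2 = orbit δ ρ w
  O2_card : O2.ncard = 2 * 3 ^ c
  other_is_orbit : ∃ w : List Q, w.length = c + 1 ∧
    orbit δ ρ w = {v : List Q | v.length = c + 1} \ O2
  other_card : ({v : List Q | v.length = c + 1} \ O2).ncard = 3 ^ c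


section Aux

variable {Q X : Type*} (δ : X → Q → Q) (ρ : Q → X → X)

theorem length_dExt (i : X) (u : List Q) : (dExt δ ρ i u).length = u.length := by
  induction u generalizing i with
  | nil => rfl
  | cons x w ih => simp [dExt, ih]

theorem length_dWord (s : List X) (u : List Q) : (dWord δ ρ s u).length = u.length := by
  induction s generalizing u with
  | nil => rfl
  | cons i s ih => simp [dWord, ih, length_dExt]

/-- The letter obtained after running `i` through the word `u` in the dual automaton. -/
def rrun : List Q → X → X
  | [], i => i
  | x :: u, i => rrun u (ρ x i)

theorem dExt_append (i : X) (u v : List Q) :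
    dExt δ ρ i (u ++ v) = dExt δ ρ i u ++ dExt δ ρ (rrun ρ u i) v := by
  induction u generalizing i with
  | nil => rfl
  | cons x w ih => simp [dExt, rrun, ih]

/-- Running a word `s` over `Σ` through a word `u` over `Q`. -/
def srun : List Q → List X → List X
  | _, [] => []
  | u, i :: s => rrun ρ u i :: srun (dExt δ ρ i u) s

theorem dWord_append (s : List X) (u v : List Q) :
    dWord δ ρ s (u ++ v) = dWord δ ρ s u ++ dWord δ ρ (srun δ ρ u s) v := by
  induction s generalizing u v with
  | nil => rfl
  | cons i s ih => simp [dWord, srun, dExt_append, ih]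

theorem dExt_inj (hδ : ∀ i, Function.Injective (δ i)) :
    ∀ (u v : List Q) (i : X), dExt δ ρ i u = dExt δ ρ i v → u = v := by
  intro u
  induction u with
  | nil =>
    intro v i h
    cases v with
    | nil => rfl
    | cons y t => exact absurd h (by simp [dExt])
  | cons x w ih =>
    intro v i h
    cases v with
    | nil => exact absurd h (by simp [dExt])
    | cons y t =>
      simp only [dExt, List.cons.injEq] at h
      obtain ⟨h1, h2⟩ := h
      obtain rfl : x = y := hδ i h1
      rw [ih t (ρ x i) h2]

theorem dWord_inj (hδ : ∀ i, Function.Injective (δ i)) :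
    ∀ (s : List X) (u v : List Q), dWord δ ρ s u = dWord δ ρ s v → u = v := by
  intro s
  induction s with
  | nil => intro u v h; exact h
  | cons i s ih =>
    intro u v h
    exact dExt_inj δ ρ hδ u v i (ih _ _ h)

theorem dWord_dWord (s t : List X) (u : List Q) :
    dWord δ ρ t (dWord δ ρ s u) = dWord δ ρ (s ++ t) u := by
  induction s generalizing u with
  | nil => rfl
  | cons i s ih => simp [dWord, ih]

variable {c : ℕ} {O2 : Set (List Q)}

theorem finQ (hs : StandingSetup δ ρ c O2) : Finite Q := by
  have h : 0 < Nat.card Q := by rw [hs.card_three]; norm_num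
  exact (Nat.card_pos_iff.mp h).2

theorem nonemptyQ (hs : StandingSetup δ ρ c O2) : Nonempty Q := by
  have h : 0 < Nat.card Q := by rw [hs.card_three]; norm_num
  exact (Nat.card_pos_iff.mp h).1

theorem O2_closed (hs : StandingSetup δ ρ c O2) (s : List X) {y : List Q} (hy : y ∈ O2) :
    dWord δ ρ s y ∈ O2 := by
  obtain ⟨w1, hw1, hO2⟩ := hs.O2_is_orbit
  rw [hO2] at hy ⊢
  obtain ⟨t, ht⟩ := hy
  exact ⟨t ++ s, by rw [← dWord_dWord, ht]⟩

theorem O2_length (hs : StandingSetup δ ρ c O2) {y : List Q} (hy : y ∈ O2) :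
    y.length = c + 1 := by
  obtain ⟨w1, hw1, hO2⟩ := hs.O2_is_orbit
  rw [hO2] at hy
  obtain ⟨t, ht⟩ := hy
  rw [← ht, length_dWord, hw1]

theorem A_le (hs : StandingSetup δ ρ c O2) {w w' : List Q}
    (hw : w.length = c) (hw' : w'.length = c) :
    {x : Q | w ++ [x] ∈ O2}.ncard ≤ {x : Q | w' ++ [x] ∈ O2}.ncard := by
  haveI : Finite Q := finQ δ ρ hs
  obtain ⟨s, hsw⟩ := hs.trans_c w w' hw hw'
  set t := srun δ ρ w s with ht
  have hsingle : ∀ x : Q, ∃ z : Q, dWord δ ρ t [x] = [z] := by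
    intro x
    exact List.length_eq_one_iff.mp (by simp [length_dWord])
  choose g hg using hsingle
  apply Set.ncard_le_ncard_of_injOn g
  · intro x hx
    have hmem : dWord δ ρ s (w ++ [x]) ∈ O2 := O2_closed δ ρ hs s hx
    rw [dWord_append, hsw, ← ht, hg] at hmem
    exact hmem
  · intro x1 hx1 x2 hx2 hgx
    have heq : dWord δ ρ t [x1] = dWord δ ρ t [x2] := by rw [hg, hg, hgx]
    have := dWord_inj δ ρ (fun i => (hs.reversible i).injective) t [x1] [x2] heq
    simpa using this

theorem lenc_card (hs : StandingSetup δ ρ c O2) :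
    {l : List Q | l.length = c}.ncard = 3 ^ c := by
  haveI : Finite Q := finQ δ ρ hs
  haveI : Fintype Q := Fintype.ofFinite Q
  rw [← Nat.card_coe_set_eq]
  have e : {l : List Q | l.length = c} ≃ List.Vector Q c :=
    Equiv.subtypeEquivRight fun _ => Iff.rfl
  rw [Nat.card_congr e, Nat.card_eq_fintype_card, card_vector]
  have : Fintype.card Q = 3 := by rw [← Nat.card_eq_fintype_card, hs.card_three]
  rw [this]

theorem A_two (hs : StandingSetup δ ρ c O2) {w : List Q} (hw : w.length = c) :
    2 ≤ {x : Q | w ++ [x] ∈ O2}.ncard := by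
  haveI : Finite Q := finQ δ ρ hs
  by_contra hlt
  push_neg at hlt
  have hone : ∀ w' : List Q, w'.length = c → {x : Q | w' ++ [x] ∈ O2}.ncard ≤ 1 := by
    intro w' hw'
    have := A_le δ ρ hs hw' hw
    omega
  have hinj : Set.InjOn List.dropLast O2 := by
    intro y1 hy1 y2 hy2 hdd
    have hl1 : y1.length = c + 1 := O2_length δ ρ hs hy1
    have hl2 : y2.length = c + 1 := O2_length δ ρ hs hy2
    have hne1 : y1 ≠ [] := by intro h; rw [h] at hl1; simp at hl1
    have hne2 : y2 ≠ [] := by intro h; rw [h] at hl2; simp at hl2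
    have e1 : y1.dropLast ++ [y1.getLast hne1] = y1 := List.dropLast_append_getLast hne1
    have e2 : y2.dropLast ++ [y2.getLast hne2] = y2 := List.dropLast_append_getLast hne2
    have hlen : y1.dropLast.length = c := by
      rw [List.length_dropLast, hl1]
      omega
    have hx1 : y1.getLast hne1 ∈ {x : Q | y1.dropLast ++ [x] ∈ O2} := by
      show y1.dropLast ++ [y1.getLast hne1] ∈ O2
      rw [e1]; exact hy1
    have hx2 : y2.getLast hne2 ∈ {x : Q | y1.dropLast ++ [x] ∈ O2} := by
      show y1.dropLast ++ [y2.getLast hne2] ∈ O2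
      rw [hdd, e2]; exact hy2
    have hx12 := (Set.ncard_le_one (Set.toFinite _)).mp (hone _ hlen)
      _ hx1 _ hx2
    rw [← e1, ← e2, hdd, hx12]
  have hTfin : {l : List Q | l.length = c}.Finite := List.finite_length_eq Q c
  have hle : O2.ncard ≤ {l : List Q | l.length = c}.ncard := by
    apply Set.ncard_le_ncard_of_injOn List.dropLast _ hinj hTfin
    intro y hy
    show y.dropLast.length = c
    rw [List.length_dropLast, O2_length δ ρ hs hy]
    omega
  rw [hs.O2_card, lenc_card δ ρ hs] at hle
  have hp : 0 < 3 ^ c := pow_pos (by norm_num) c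
  omega

theorem key (hs : StandingSetup δ ρ c O2) {w1 w2 : List Q}
    (h1 : w1.length = c) (h2 : w2.length = c) :
    ∃ x : Q, w1 ++ [x] ∈ O2 ∧ w2 ++ [x] ∈ O2 := by
  haveI : Finite Q := finQ δ ρ hs
  by_contra h
  push_neg at h
  set A1 := {x : Q | w1 ++ [x] ∈ O2} with hA1
  set A2 := {x : Q | w2 ++ [x] ∈ O2} with hA2
  have hdisj : Disjoint A1 A2 := by
    rw [Set.disjoint_left]
    intro x hx1 hx2
    exact h x hx1 hx2
  have hun : (A1 ∪ A2).ncard = A1.ncard + A2.ncard :=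
    Set.ncard_union_eq hdisj (Set.toFinite _) (Set.toFinite _)
  have hle : (A1 ∪ A2).ncard ≤ 3 := by
    rw [← hs.card_three, ← Set.ncard_univ]
    exact Set.ncard_le_ncard (Set.subset_univ _) Set.finite_univ
  have g1 := A_two δ ρ hs h1
  have g2 := A_two δ ρ hs h2
  rw [← hA1] at g1
  rw [← hA2] at g2
  omega

theorem infix_snoc {α : Type*} {f w : List α} {x : α} (h : f <:+: w ++ [x]) :
    f <:+: w ∨ f <:+ w ++ [x] := by
  obtain ⟨s, t, hst⟩ := h
  cases t with
  | nil => right; exact ⟨s, by simpa using hst⟩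
  | cons a t' =>
    left
    have hne : (a :: t') ≠ ([] : List α) := by simp
    have e := List.dropLast_append_getLast hne
    rw [← e, ← List.append_assoc] at hst
    have hmain := (List.append_inj' hst rfl).1
    exact ⟨s, (a :: t').dropLast, hmain⟩

theorem suffix_snoc_eq {f w : List Q} {x : Q} (h : f <:+ w ++ [x])
    (hf : f.length = c + 1) (hw : c ≤ w.length) :
    f = w.drop (w.length - c) ++ [x] := by
  obtain ⟨p, hp⟩ := h
  have hlen : p.length + (c + 1) = w.length + 1 := by
    have := congrArg List.length hp
    simpa [hf] using this
  have hpl : p.length = w.length - c := by omega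
  have hfd : f = (w ++ [x]).drop p.length := by rw [← hp, List.drop_left]
  rw [hfd, hpl, List.drop_append]
  have : w.length - c - w.length = 0 := by omega
  rw [this, List.drop_zero]

theorem orbital_snoc {u : List Q} {x : Q} (hu : Orbital c O2 u)
    (h : c ≤ u.length → u.drop (u.length - c) ++ [x] ∈ O2) :
    Orbital c O2 (u ++ [x]) := by
  intro f hf hinf
  rcases infix_snoc hinf with h1 | h2
  · exact hu f hf h1
  · have hcu : c ≤ u.length := by
      have hl := h2.length_le
      rw [hf, List.length_append] at hl
      simpa using hl
    rw [suffix_snoc_eq h2 hf hcu]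
    exact h hcu

theorem pick (hs : StandingSetup δ ρ c O2) {u v : List Q}
    (hu : Orbital c O2 u) (hv : Orbital c O2 v) :
    ∃ x : Q, Orbital c O2 (u ++ [x]) ∧ Orbital c O2 (v ++ [x]) := by
  obtain ⟨q0⟩ := nonemptyQ δ ρ hs
  set wu := if c ≤ u.length then u.drop (u.length - c) else List.replicate c q0 with hwu
  set wv := if c ≤ v.length then v.drop (v.length - c) else List.replicate c q0 with hwv
  have hwul : wu.length = c := by
    rw [hwu]; split
    · rw [List.length_drop]; omega
    · simp
  have hwvl : wv.length = c := by
    rw [hwv]; split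
    · rw [List.length_drop]; omega
    · simp
  obtain ⟨x, hx1, hx2⟩ := key δ ρ hs hwul hwvl
  refine ⟨x, orbital_snoc hu (fun hc => ?_), orbital_snoc hv (fun hc => ?_)⟩
  · rwa [hwu, if_pos hc] at hx1
  · rwa [hwv, if_pos hc] at hx2

end Aux

/-- Under the standing setup, any two orbital words admit a common
extension of any given length that keeps both orbital. -/
theorem orbital_common_extension
    {Q X : Type*} (δ : X → Q → Q) (ρ : Q → X → X) (c : ℕ) (O2 : Set (List Q))
    (hs : StandingSetup δ ρ c O2)
    (u v : List Q) (hu : Orbital c O2 u) (hv : Orbital c O2 v) (n : ℕ) :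
    ∃ r : List Q, r.length = n ∧ Orbital c O2 (u ++ r) ∧ Orbital c O2 (v ++ r) := by
  induction n with
  | zero => exact ⟨[], rfl, by simpa using hu, by simpa using hv⟩
  | succ n ih =>
    obtain ⟨r, hr, h1, h2⟩ := ih
    obtain ⟨x, hx1, hx2⟩ := pick δ ρ hs h1 h2
    exact ⟨r ++ [x], by simp [hr], by rwa [← List.append_assoc],
      by rwa [← List.append_assoc]⟩

end MealyFormal
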